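/- For every u ∈ (0, 3/10) and v ∈ (3/5, 1), all four partial derivatives of g vanish at the point 𝐤(u,v) = (k₁(u,v), k₂(u,v), k₃(u,v), k₄(u,v)); that is, the gradient of g is zero at every point of the surface Π. -/

import Mathlib

open Set

/-- `h(x) = (x^x (1−x)^{1−x})⁻¹` (real powers). -/
noncomputable def hfun (x : ℝ) : ℝ := (x ^ x * (1 - x) ^ (1 - x))⁻¹

/-- The function `g = log G` from the LDA posterior analysis. -/
noncomputable def gfun (a b c d : ℝ) : ℝ :=
  2 * Real.log (hfun ((a + b + c + d) / 2))
    + (3/10) * Real.log (hfun (10 * a / 3)) + (7/10) * Real.log (hfun (10 * b / 7))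
    + (3/5) * Real.log (hfun (5 * c / 3)) + (2/5) * Real.log (hfun (5 * d / 2))
    - (9/10) * Real.log (hfun (10 * (a + c) / 9))
    - (11/10) * Real.log (hfun (10 * (b + d) / 11))
    - Real.log (hfun (a + b)) - Real.log (hfun (c + d))

/-- First coordinate of the parametrization `𝐤(u,v)` of the surface `Π`. -/
noncomputable def kk1 (u v : ℝ) : ℝ := u * (v - 3/10) / (v - u)
/-- Second coordinate of `𝐤(u,v)`. -/
noncomputable def kk2 (u v : ℝ) : ℝ := (1 - u) * (v - 3/10) / (v - u)
/-- Third coordinate of `𝐤(u,v)`. -/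
noncomputable def kk3 (u v : ℝ) : ℝ := u * (v - 3/5) / (v - u)
/-- Fourth coordinate of `𝐤(u,v)`. -/
noncomputable def kk4 (u v : ℝ) : ℝ := (1 - u) * (v - 3/5) / (v - u)

lemma log_hfun_eq {x : ℝ} (h0 : 0 < x) (h1 : x < 1) :
    Real.log (hfun x) = -(x * Real.log x + (1 - x) * Real.log (1 - x)) := by
  have h2 : 0 < 1 - x := by linarith
  unfold hfun
  rw [Real.log_inv, Real.log_mul (Real.rpow_pos_of_pos h0 x).ne'
    (Real.rpow_pos_of_pos h2 (1-x)).ne', Real.log_rpow h0, Real.log_rpow h2]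

lemma hasDerivAt_log_hfun {x : ℝ} (h0 : 0 < x) (h1 : x < 1) :
    HasDerivAt (fun t => Real.log (hfun t)) (Real.log (1 - x) - Real.log x) x := by
  have h2 : 0 < 1 - x := by linarith
  have hF : HasDerivAt (fun t : ℝ => -(t * Real.log t + (1 - t) * Real.log (1 - t)))
      (Real.log (1 - x) - Real.log x) x := by
    have d1 : HasDerivAt (fun t : ℝ => t * Real.log t) (Real.log x + 1) x := by
      have := (hasDerivAt_id x).mul (Real.hasDerivAt_log h0.ne')
      refine this.congr_deriv ?_
      field_simp
      simp only [id]
      ring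
    have hi : HasDerivAt (fun t : ℝ => 1 - t) (-1) x := by
      simpa using (hasDerivAt_id x).const_sub 1
    have d2 : HasDerivAt (fun t : ℝ => (1 - t) * Real.log (1 - t))
        (-(Real.log (1 - x) + 1)) x := by
      have := hi.mul ((Real.hasDerivAt_log h2.ne').comp x hi)
      refine this.congr_deriv ?_
      field_simp
      simp only [Function.comp_apply]
      ring
    have := (d1.add d2).neg
    refine this.congr_deriv ?_
    ring
  apply hF.congr_of_eventuallyEq
  filter_upwards [Ioo_mem_nhds h0 h1] with t ht
  exact log_hfun_eq ht.1 ht.2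

lemma key (c₁ c₂ x : ℝ) (f : ℝ → ℝ) (hf : ∀ t, f t = c₁ * t + c₂)
    (h0 : 0 < f x) (h1 : f x < 1) :
    HasDerivAt (fun t => Real.log (hfun (f t))) ((Real.log (1 - f x) - Real.log (f x)) * c₁) x := by
  have h1' : HasDerivAt (fun t : ℝ => c₁ * t + c₂) c₁ x := by
    simpa using ((hasDerivAt_id x).const_mul c₁).add_const c₂
  have hfd : HasDerivAt f c₁ x :=
    h1'.congr_of_eventuallyEq (Filter.Eventually.of_forall hf)
  exact (hasDerivAt_log_hfun h0 h1).comp x hfd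

lemma deriv_a (a b c d : ℝ)
    (m1 : (a+b+c+d)/2 ∈ Ioo (0:ℝ) 1) (m2 : 10*a/3 ∈ Ioo (0:ℝ) 1)
    (m6 : 10*(a+c)/9 ∈ Ioo (0:ℝ) 1) (m8 : a+b ∈ Ioo (0:ℝ) 1)
    (P : (1-(a+b+c+d)/2)*((1-10*a/3)*((10*(a+c)/9)*(a+b)))
        = ((a+b+c+d)/2)*((10*a/3)*((1-10*(a+c)/9)*(1-(a+b))))) :
    HasDerivAt (fun x => gfun x b c d) 0 a := by
  obtain ⟨p1, q1⟩ := m1; obtain ⟨p2, q2⟩ := m2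
  obtain ⟨p6, q6⟩ := m6; obtain ⟨p8, q8⟩ := m8
  have g1 : (0:ℝ) < 1 - (a+b+c+d)/2 := by linarith
  have g2 : (0:ℝ) < 1 - 10*a/3 := by linarith
  have g6 : (0:ℝ) < 1 - 10*(a+c)/9 := by linarith
  have g8 : (0:ℝ) < 1 - (a+b) := by linarith
  have d1 : HasDerivAt (fun x : ℝ => Real.log (hfun ((x + b + c + d)/2)))
      ((Real.log (1 - (a+b+c+d)/2) - Real.log ((a+b+c+d)/2)) * (1/2)) a :=
    key (1/2) ((b+c+d)/2) a _ (fun t => by ring) p1 q1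
  have d2 : HasDerivAt (fun x : ℝ => Real.log (hfun (10 * x / 3)))
      ((Real.log (1 - 10*a/3) - Real.log (10*a/3)) * (10/3)) a :=
    key (10/3) 0 a _ (fun t => by ring) p2 q2
  have d6 : HasDerivAt (fun x : ℝ => Real.log (hfun (10 * (x + c) / 9)))
      ((Real.log (1 - 10*(a+c)/9) - Real.log (10*(a+c)/9)) * (10/9)) a :=
    key (10/9) (10*c/9) a _ (fun t => by ring) p6 q6
  have d8 : HasDerivAt (fun x : ℝ => Real.log (hfun (x + b)))
      ((Real.log (1 - (a+b)) - Real.log (a+b)) * 1) a :=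
    key 1 b a _ (fun t => by ring) p8 q8
  have H := ((((((((d1.const_mul 2).add (d2.const_mul (3/10))).add
      (hasDerivAt_const a ((7/10) * Real.log (hfun (10*b/7))))).add
      (hasDerivAt_const a ((3/5) * Real.log (hfun (5*c/3))))).add
      (hasDerivAt_const a ((2/5) * Real.log (hfun (5*d/2))))).sub
      (d6.const_mul (9/10))).sub
      (hasDerivAt_const a ((11/10) * Real.log (hfun (10*(b+d)/11))))).sub d8).sub
      (hasDerivAt_const a (Real.log (hfun (c+d))))
  have hP := congrArg Real.log P
  rw [Real.log_mul g1.ne' (mul_ne_zero g2.ne' (mul_ne_zero p6.ne' p8.ne')),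
    Real.log_mul g2.ne' (mul_ne_zero p6.ne' p8.ne'), Real.log_mul p6.ne' p8.ne',
    Real.log_mul p1.ne' (mul_ne_zero p2.ne' (mul_ne_zero g6.ne' g8.ne')),
    Real.log_mul p2.ne' (mul_ne_zero g6.ne' g8.ne'), Real.log_mul g6.ne' g8.ne'] at hP
  simp only [gfun]
  refine H.congr_deriv ?_
  linear_combination hP

lemma deriv_b (a b c d : ℝ)
    (m1 : (a+b+c+d)/2 ∈ Ioo (0:ℝ) 1) (m3 : 10*b/7 ∈ Ioo (0:ℝ) 1)
    (m7 : 10*(b+d)/11 ∈ Ioo (0:ℝ) 1) (m8 : a+b ∈ Ioo (0:ℝ) 1)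
    (P : (1-(a+b+c+d)/2)*((1-10*b/7)*((10*(b+d)/11)*(a+b)))
        = ((a+b+c+d)/2)*((10*b/7)*((1-10*(b+d)/11)*(1-(a+b))))) :
    HasDerivAt (fun x => gfun a x c d) 0 b := by
  obtain ⟨p1, q1⟩ := m1; obtain ⟨p3, q3⟩ := m3
  obtain ⟨p7, q7⟩ := m7; obtain ⟨p8, q8⟩ := m8
  have g1 : (0:ℝ) < 1 - (a+b+c+d)/2 := by linarith
  have g3 : (0:ℝ) < 1 - 10*b/7 := by linarith
  have g7 : (0:ℝ) < 1 - 10*(b+d)/11 := by linarith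
  have g8 : (0:ℝ) < 1 - (a+b) := by linarith
  have d1 : HasDerivAt (fun x : ℝ => Real.log (hfun ((a + x + c + d)/2)))
      ((Real.log (1 - (a+b+c+d)/2) - Real.log ((a+b+c+d)/2)) * (1/2)) b :=
    key (1/2) ((a+c+d)/2) b _ (fun t => by ring) p1 q1
  have d3 : HasDerivAt (fun x : ℝ => Real.log (hfun (10 * x / 7)))
      ((Real.log (1 - 10*b/7) - Real.log (10*b/7)) * (10/7)) b :=
    key (10/7) 0 b _ (fun t => by ring) p3 q3
  have d7 : HasDerivAt (fun x : ℝ => Real.log (hfun (10 * (x + d) / 11)))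
      ((Real.log (1 - 10*(b+d)/11) - Real.log (10*(b+d)/11)) * (10/11)) b :=
    key (10/11) (10*d/11) b _ (fun t => by ring) p7 q7
  have d8 : HasDerivAt (fun x : ℝ => Real.log (hfun (a + x)))
      ((Real.log (1 - (a+b)) - Real.log (a+b)) * 1) b :=
    key 1 a b _ (fun t => by ring) p8 q8
  have H := ((((((((d1.const_mul 2).add
      (hasDerivAt_const b ((3/10) * Real.log (hfun (10*a/3))))).add
      (d3.const_mul (7/10))).add
      (hasDerivAt_const b ((3/5) * Real.log (hfun (5*c/3))))).add
      (hasDerivAt_const b ((2/5) * Real.log (hfun (5*d/2))))).sub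
      (hasDerivAt_const b ((9/10) * Real.log (hfun (10*(a+c)/9))))).sub
      (d7.const_mul (11/10))).sub d8).sub
      (hasDerivAt_const b (Real.log (hfun (c+d))))
  have hP := congrArg Real.log P
  rw [Real.log_mul g1.ne' (mul_ne_zero g3.ne' (mul_ne_zero p7.ne' p8.ne')),
    Real.log_mul g3.ne' (mul_ne_zero p7.ne' p8.ne'), Real.log_mul p7.ne' p8.ne',
    Real.log_mul p1.ne' (mul_ne_zero p3.ne' (mul_ne_zero g7.ne' g8.ne')),
    Real.log_mul p3.ne' (mul_ne_zero g7.ne' g8.ne'), Real.log_mul g7.ne' g8.ne'] at hP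
  simp only [gfun]
  refine H.congr_deriv ?_
  linear_combination hP

lemma deriv_c (a b c d : ℝ)
    (m1 : (a+b+c+d)/2 ∈ Ioo (0:ℝ) 1) (m4 : 5*c/3 ∈ Ioo (0:ℝ) 1)
    (m6 : 10*(a+c)/9 ∈ Ioo (0:ℝ) 1) (m9 : c+d ∈ Ioo (0:ℝ) 1)
    (P : (1-(a+b+c+d)/2)*((1-5*c/3)*((10*(a+c)/9)*(c+d)))
        = ((a+b+c+d)/2)*((5*c/3)*((1-10*(a+c)/9)*(1-(c+d))))) :
    HasDerivAt (fun x => gfun a b x d) 0 c := by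
  obtain ⟨p1, q1⟩ := m1; obtain ⟨p4, q4⟩ := m4
  obtain ⟨p6, q6⟩ := m6; obtain ⟨p9, q9⟩ := m9
  have g1 : (0:ℝ) < 1 - (a+b+c+d)/2 := by linarith
  have g4 : (0:ℝ) < 1 - 5*c/3 := by linarith
  have g6 : (0:ℝ) < 1 - 10*(a+c)/9 := by linarith
  have g9 : (0:ℝ) < 1 - (c+d) := by linarith
  have d1 : HasDerivAt (fun x : ℝ => Real.log (hfun ((a + b + x + d)/2)))
      ((Real.log (1 - (a+b+c+d)/2) - Real.log ((a+b+c+d)/2)) * (1/2)) c :=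
    key (1/2) ((a+b+d)/2) c _ (fun t => by ring) p1 q1
  have d4 : HasDerivAt (fun x : ℝ => Real.log (hfun (5 * x / 3)))
      ((Real.log (1 - 5*c/3) - Real.log (5*c/3)) * (5/3)) c :=
    key (5/3) 0 c _ (fun t => by ring) p4 q4
  have d6 : HasDerivAt (fun x : ℝ => Real.log (hfun (10 * (a + x) / 9)))
      ((Real.log (1 - 10*(a+c)/9) - Real.log (10*(a+c)/9)) * (10/9)) c :=
    key (10/9) (10*a/9) c _ (fun t => by ring) p6 q6
  have d9 : HasDerivAt (fun x : ℝ => Real.log (hfun (x + d)))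
      ((Real.log (1 - (c+d)) - Real.log (c+d)) * 1) c :=
    key 1 d c _ (fun t => by ring) p9 q9
  have H := ((((((((d1.const_mul 2).add
      (hasDerivAt_const c ((3/10) * Real.log (hfun (10*a/3))))).add
      (hasDerivAt_const c ((7/10) * Real.log (hfun (10*b/7))))).add
      (d4.const_mul (3/5))).add
      (hasDerivAt_const c ((2/5) * Real.log (hfun (5*d/2))))).sub
      (d6.const_mul (9/10))).sub
      (hasDerivAt_const c ((11/10) * Real.log (hfun (10*(b+d)/11))))).sub
      (hasDerivAt_const c (Real.log (hfun (a+b))))).sub d9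
  have hP := congrArg Real.log P
  rw [Real.log_mul g1.ne' (mul_ne_zero g4.ne' (mul_ne_zero p6.ne' p9.ne')),
    Real.log_mul g4.ne' (mul_ne_zero p6.ne' p9.ne'), Real.log_mul p6.ne' p9.ne',
    Real.log_mul p1.ne' (mul_ne_zero p4.ne' (mul_ne_zero g6.ne' g9.ne')),
    Real.log_mul p4.ne' (mul_ne_zero g6.ne' g9.ne'), Real.log_mul g6.ne' g9.ne'] at hP
  simp only [gfun]
  refine H.congr_deriv ?_
  linear_combination hP

lemma deriv_d (a b c d : ℝ)
    (m1 : (a+b+c+d)/2 ∈ Ioo (0:ℝ) 1) (m5 : 5*d/2 ∈ Ioo (0:ℝ) 1)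
    (m7 : 10*(b+d)/11 ∈ Ioo (0:ℝ) 1) (m9 : c+d ∈ Ioo (0:ℝ) 1)
    (P : (1-(a+b+c+d)/2)*((1-5*d/2)*((10*(b+d)/11)*(c+d)))
        = ((a+b+c+d)/2)*((5*d/2)*((1-10*(b+d)/11)*(1-(c+d))))) :
    HasDerivAt (fun x => gfun a b c x) 0 d := by
  obtain ⟨p1, q1⟩ := m1; obtain ⟨p5, q5⟩ := m5
  obtain ⟨p7, q7⟩ := m7; obtain ⟨p9, q9⟩ := m9
  have g1 : (0:ℝ) < 1 - (a+b+c+d)/2 := by linarith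
  have g5 : (0:ℝ) < 1 - 5*d/2 := by linarith
  have g7 : (0:ℝ) < 1 - 10*(b+d)/11 := by linarith
  have g9 : (0:ℝ) < 1 - (c+d) := by linarith
  have d1 : HasDerivAt (fun x : ℝ => Real.log (hfun ((a + b + c + x)/2)))
      ((Real.log (1 - (a+b+c+d)/2) - Real.log ((a+b+c+d)/2)) * (1/2)) d :=
    key (1/2) ((a+b+c)/2) d _ (fun t => by ring) p1 q1
  have d5 : HasDerivAt (fun x : ℝ => Real.log (hfun (5 * x / 2)))
      ((Real.log (1 - 5*d/2) - Real.log (5*d/2)) * (5/2)) d :=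
    key (5/2) 0 d _ (fun t => by ring) p5 q5
  have d7 : HasDerivAt (fun x : ℝ => Real.log (hfun (10 * (b + x) / 11)))
      ((Real.log (1 - 10*(b+d)/11) - Real.log (10*(b+d)/11)) * (10/11)) d :=
    key (10/11) (10*b/11) d _ (fun t => by ring) p7 q7
  have d9 : HasDerivAt (fun x : ℝ => Real.log (hfun (c + x)))
      ((Real.log (1 - (c+d)) - Real.log (c+d)) * 1) d :=
    key 1 c d _ (fun t => by ring) p9 q9
  have H := ((((((((d1.const_mul 2).add
      (hasDerivAt_const d ((3/10) * Real.log (hfun (10*a/3))))).add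
      (hasDerivAt_const d ((7/10) * Real.log (hfun (10*b/7))))).add
      (hasDerivAt_const d ((3/5) * Real.log (hfun (5*c/3))))).add
      (d5.const_mul (2/5))).sub
      (hasDerivAt_const d ((9/10) * Real.log (hfun (10*(a+c)/9))))).sub
      (d7.const_mul (11/10))).sub
      (hasDerivAt_const d (Real.log (hfun (a+b))))).sub d9
  have hP := congrArg Real.log P
  rw [Real.log_mul g1.ne' (mul_ne_zero g5.ne' (mul_ne_zero p7.ne' p9.ne')),
    Real.log_mul g5.ne' (mul_ne_zero p7.ne' p9.ne'), Real.log_mul p7.ne' p9.ne',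
    Real.log_mul p1.ne' (mul_ne_zero p5.ne' (mul_ne_zero g7.ne' g9.ne')),
    Real.log_mul p5.ne' (mul_ne_zero g7.ne' g9.ne'), Real.log_mul g7.ne' g9.ne'] at hP
  simp only [gfun]
  refine H.congr_deriv ?_
  linear_combination hP

set_option maxHeartbeats 2000000 in
/-- all four partial derivatives of `g` vanish at every point
`𝐤(u,v)` of the surface `Π`, for `(u,v) ∈ (0,3/10) × (3/5,1)`. -/
theorem gradient_g_vanishes_on_Pi (u v : ℝ)
    (hu : u ∈ Ioo (0:ℝ) (3/10)) (hv : v ∈ Ioo (3/5:ℝ) 1) :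
    HasDerivAt (fun x => gfun x (kk2 u v) (kk3 u v) (kk4 u v)) 0 (kk1 u v) ∧
    HasDerivAt (fun x => gfun (kk1 u v) x (kk3 u v) (kk4 u v)) 0 (kk2 u v) ∧
    HasDerivAt (fun x => gfun (kk1 u v) (kk2 u v) x (kk4 u v)) 0 (kk3 u v) ∧
    HasDerivAt (fun x => gfun (kk1 u v) (kk2 u v) (kk3 u v) x) 0 (kk4 u v) := by
  obtain ⟨hu0, hu3⟩ := hu
  obtain ⟨hv3, hv1⟩ := hv
  have hD : (0:ℝ) < v - u := by linarith
  have hne : v - u ≠ 0 := hD.ne'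
  have hv0 : (0:ℝ) < v := by linarith
  have h1v : (0:ℝ) < 1 - v := by linarith
  have h1u : (0:ℝ) < 1 - u := by linarith
  have h310 : (0:ℝ) < 3 - 10*u := by linarith
  have h35 : (0:ℝ) < 3 - 5*u := by linarith
  have h920 : (0:ℝ) < 9 - 20*u := by linarith
  have m1 : (kk1 u v + kk2 u v + kk3 u v + kk4 u v)/2 ∈ Ioo (0:ℝ) 1 := by
    unfold kk1 kk2 kk3 kk4
    rw [show (u*(v-3/10)/(v-u) + (1-u)*(v-3/10)/(v-u) + u*(v-3/5)/(v-u)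
        + (1-u)*(v-3/5)/(v-u))/2 = (20*v-9)/(20*(v-u)) from by field_simp; ring]
    exact ⟨div_pos (by linarith) (by linarith), (div_lt_one (by linarith)).2 (by linarith)⟩
  have m2 : 10 * kk1 u v / 3 ∈ Ioo (0:ℝ) 1 := by
    unfold kk1
    rw [show 10 * (u*(v-3/10)/(v-u)) / 3 = (u*(10*v-3))/(3*(v-u)) from by field_simp]
    exact ⟨div_pos (by nlinarith) (by linarith),
      (div_lt_one (by linarith)).2 (by nlinarith [mul_pos hv0 h310])⟩
  have m3 : 10 * kk2 u v / 7 ∈ Ioo (0:ℝ) 1 := by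
    unfold kk2
    rw [show 10 * ((1-u)*(v-3/10)/(v-u)) / 7 = ((1-u)*(10*v-3))/(7*(v-u)) from by
      field_simp]
    exact ⟨div_pos (by nlinarith) (by linarith),
      (div_lt_one (by linarith)).2 (by nlinarith [mul_pos h1v h310])⟩
  have m4 : 5 * kk3 u v / 3 ∈ Ioo (0:ℝ) 1 := by
    unfold kk3
    rw [show 5 * (u*(v-3/5)/(v-u)) / 3 = (u*(5*v-3))/(3*(v-u)) from by field_simp]
    exact ⟨div_pos (by nlinarith) (by linarith),
      (div_lt_one (by linarith)).2 (by nlinarith [mul_pos hv0 h35])⟩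
  have m5 : 5 * kk4 u v / 2 ∈ Ioo (0:ℝ) 1 := by
    unfold kk4
    rw [show 5 * ((1-u)*(v-3/5)/(v-u)) / 2 = ((1-u)*(5*v-3))/(2*(v-u)) from by
      field_simp]
    exact ⟨div_pos (by nlinarith) (by linarith),
      (div_lt_one (by linarith)).2 (by nlinarith [mul_pos h1v h35])⟩
  have m6 : 10 * (kk1 u v + kk3 u v) / 9 ∈ Ioo (0:ℝ) 1 := by
    unfold kk1 kk3
    rw [show 10 * (u*(v-3/10)/(v-u) + u*(v-3/5)/(v-u)) / 9
        = (u*(20*v-9))/(9*(v-u)) from by field_simp; ring]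
    exact ⟨div_pos (by nlinarith) (by linarith),
      (div_lt_one (by linarith)).2 (by nlinarith [mul_pos hv0 h920])⟩
  have m7 : 10 * (kk2 u v + kk4 u v) / 11 ∈ Ioo (0:ℝ) 1 := by
    unfold kk2 kk4
    rw [show 10 * ((1-u)*(v-3/10)/(v-u) + (1-u)*(v-3/5)/(v-u)) / 11
        = ((1-u)*(20*v-9))/(11*(v-u)) from by field_simp; ring]
    exact ⟨div_pos (by nlinarith) (by linarith),
      (div_lt_one (by linarith)).2 (by nlinarith [mul_pos h1v h920])⟩
  have m8 : kk1 u v + kk2 u v ∈ Ioo (0:ℝ) 1 := by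
    unfold kk1 kk2
    rw [show u*(v-3/10)/(v-u) + (1-u)*(v-3/10)/(v-u) = (10*v-3)/(10*(v-u)) from by
      field_simp; ring]
    exact ⟨div_pos (by linarith) (by linarith), (div_lt_one (by linarith)).2 (by linarith)⟩
  have m9 : kk3 u v + kk4 u v ∈ Ioo (0:ℝ) 1 := by
    unfold kk3 kk4
    rw [show u*(v-3/5)/(v-u) + (1-u)*(v-3/5)/(v-u) = (5*v-3)/(5*(v-u)) from by
      field_simp; ring]
    exact ⟨div_pos (by linarith) (by linarith), (div_lt_one (by linarith)).2 (by linarith)⟩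
  refine ⟨deriv_a _ _ _ _ m1 m2 m6 m8 ?_, deriv_b _ _ _ _ m1 m3 m7 m8 ?_,
    deriv_c _ _ _ _ m1 m4 m6 m9 ?_, deriv_d _ _ _ _ m1 m5 m7 m9 ?_⟩ <;>
  · unfold kk1 kk2 kk3 kk4
    field_simp
    ring
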